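/- For every n ≥ 1, all positive integers k_1, …, k_n, and each of the three sides S of the triangle Δ (the segments joining (0,0), (1,0) and (0,1) pairwise), the image H_{k_1}∘H_{k_2}∘⋯∘H_{k_n}(S) is the line segment joining the images (x₁,y₁) and (x₂,y₂) of the two endpoints of S; moreover these images satisfy y₁ ≠ y₂ and (x₂−x₁)(y₂−y₁) ≤ 0, i.e., every side of the triangle H_{k_1}∘⋯∘H_{k_n}(Δ) is a nondegenerate segment that is vertical or lies on a line of negative slope. -/

import Mathlib

/-- The unit simplex `Δ = {(u,v) : u ≥ 0, v ≥ 0, u+v ≤ 1}`. -/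
def Delta : Set (ℝ × ℝ) := {p | 0 ≤ p.1 ∧ 0 ≤ p.2 ∧ p.1 + p.2 ≤ 1}

/-- The map `H_k(u,v) = (v, 1-v)/D_k` where `D_k = k(1-v) + 1 - u`. -/
noncomputable def Hmap (k : ℕ) (p : ℝ × ℝ) : ℝ × ℝ :=
  (p.2 / ((k : ℝ) * (1 - p.2) + 1 - p.1), (1 - p.2) / ((k : ℝ) * (1 - p.2) + 1 - p.1))

/-- `Hcomp k n = H_{k 1} ∘ H_{k 2} ∘ ⋯ ∘ H_{k n}`. -/
noncomputable def Hcomp (k : ℕ → ℕ) : ℕ → (ℝ × ℝ) → (ℝ × ℝ)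
  | 0 => id
  | n + 1 => Hcomp k n ∘ Hmap (k (n + 1))

/-!
`H_k` is a perspective map: `H_k(p) = N(p) / D_k(p)` with `N` and `D_k` affine and `D_k ≥ 1` on `Δ`.
Hence it maps `Δ` injectively into itself and maps every segment in `Δ` onto the segment joining
the images of its endpoints.

Substituting the inverse of `H_k`, the image of a line `α u + β v = γ` lies on the line
`(α + β - γ) x + ((k + 1) α - γ) y = α`. The lines with `0 ≤ γ ≤ α`, `γ ≤ β` and `(α, β) ≠ 0`
contain the sides of `Δ` and are preserved by this transformation, which moreover makes `α > 0`.
Two distinct points of a line `α x + β y = γ` with `α > 0` and `β ≥ 0` have different `y` and span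
a vertical segment or one of negative slope.
-/

theorem image_segment_perspective {𝕜 E F : Type*} [Field 𝕜] [LinearOrder 𝕜]
    [IsStrictOrderedRing 𝕜] [AddCommGroup E] [Module 𝕜 E] [AddCommGroup F] [Module 𝕜 F]
    (f : E →ᵃ[𝕜] F) (D : E →ᵃ[𝕜] 𝕜) {p q : E} (hp : 0 < D p) (hq : 0 < D q) :
    (fun x => (D x)⁻¹ • f x) '' segment 𝕜 p q =
      segment 𝕜 ((D p)⁻¹ • f p) ((D q)⁻¹ • f q) := by
  ext w
  constructor
  · rintro ⟨_, ⟨a, b, ha, hb, hab, rfl⟩, rfl⟩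
    have hE : 0 < a * D p + b * D q := convex_Ioi 0 hp hq ha hb hab
    refine ⟨a * D p / (a * D p + b * D q), b * D q / (a * D p + b * D q),
      by positivity, by positivity, by field_simp, ?_⟩
    simp only [Convex.combo_affine_apply hab, smul_eq_mul, smul_add, smul_smul]
    congr 2 <;> field_simp
  · rintro ⟨a, b, ha, hb, hab, rfl⟩
    set S := a / D p + b / D q
    have hS : 0 < S := by
      simpa [S, div_eq_mul_inv] using convex_Ioi 0 (inv_pos.2 hp) (inv_pos.2 hq) ha hb hab
    have hab' : a / D p / S + b / D q / S = 1 := by rw [← add_div, div_self hS.ne']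
    refine ⟨(a / D p / S) • p + (b / D q / S) • q,
      ⟨_, _, by positivity, by positivity, hab', rfl⟩, ?_⟩
    simp only [Convex.combo_affine_apply hab', smul_eq_mul, smul_add, smul_smul]
    congr 2 <;> field_simp <;> rw [hab, mul_one]

namespace Hmap

def numerator : ℝ × ℝ →ᵃ[ℝ] ℝ × ℝ where
  toFun p := (p.2, 1 - p.2)
  linear := (LinearMap.snd ℝ ℝ ℝ).prod (-LinearMap.snd ℝ ℝ ℝ)
  map_vadd' p v := by ext <;> simp; ring

def denominator (k : ℕ) : ℝ × ℝ →ᵃ[ℝ] ℝ where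
  toFun p := k * (1 - p.2) + 1 - p.1
  linear := -(k : ℝ) • LinearMap.snd ℝ ℝ ℝ - LinearMap.fst ℝ ℝ ℝ
  map_vadd' p v := by simp; ring

theorem eq_inv_smul (k : ℕ) : Hmap k = fun p => (denominator k p)⁻¹ • numerator p := by
  funext p
  ext <;> simp [Hmap, numerator, denominator, div_eq_inv_mul]

variable {k : ℕ} {p q : ℝ × ℝ}

theorem one_le_denominator (hk : 1 ≤ k) (hp : p ∈ Delta) : 1 ≤ denominator k p := by
  obtain ⟨hu, hv, huv⟩ := hp
  have hk' : (1 : ℝ) ≤ k := by exact_mod_cast hk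
  change 1 ≤ k * (1 - p.2) + 1 - p.1
  nlinarith

theorem mapsTo (hk : 1 ≤ k) : Set.MapsTo (Hmap k) Delta Delta := by
  intro p hp
  have hD := one_le_denominator hk hp
  obtain ⟨hu, hv, huv⟩ := hp
  rw [eq_inv_smul]
  simp only [numerator, denominator, AffineMap.coe_mk, Prod.smul_mk, smul_eq_mul] at hD ⊢
  refine ⟨by positivity, mul_nonneg (by positivity) (by linarith), ?_⟩
  rw [← mul_add, add_sub_cancel]
  simpa using inv_le_one_of_one_le₀ hD

theorem injOn (hk : 1 ≤ k) : Set.InjOn (Hmap k) Delta := by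
  intro p hp q hq h
  have hDp := one_le_denominator hk hp
  have hDq := one_le_denominator hk hq
  simp only [eq_inv_smul, numerator, denominator, AffineMap.coe_mk, Prod.smul_mk, smul_eq_mul,
    Prod.mk.injEq] at h hDp hDq
  obtain ⟨h1, h2⟩ := h
  -- the coordinates of `H_k(u,v)` add up to `1 / D_k(u,v)`
  have hD : (k : ℝ) * (1 - p.2) + 1 - p.1 = k * (1 - q.2) + 1 - q.1 := by
    have := congrArg₂ (· + ·) h1 h2
    simp only [← mul_add, add_sub_cancel, mul_one, inv_inj] at this
    exact this
  rw [hD] at h1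
  have hv : p.2 = q.2 := mul_left_cancel₀ (by positivity) h1
  exact Prod.ext (by rw [hv] at hD; linarith) hv

theorem image_segment (hk : 1 ≤ k) (hp : p ∈ Delta) (hq : q ∈ Delta) :
    Hmap k '' segment ℝ p q = segment ℝ (Hmap k p) (Hmap k q) := by
  simp only [eq_inv_smul]
  exact image_segment_perspective _ _ (one_pos.trans_le (one_le_denominator hk hp))
    (one_pos.trans_le (one_le_denominator hk hq))

theorem mem_line {α β γ : ℝ} (hD : denominator k p ≠ 0) (h : α * p.1 + β * p.2 = γ) :
    (α + β - γ) * (Hmap k p).1 + ((k + 1) * α - γ) * (Hmap k p).2 = α := by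
  -- substitute the inverse `u = (x + (k + 1) y - 1) / (x + y)`, `v = x / (x + y)` of `H_k`
  simp only [Hmap]
  change (k : ℝ) * (1 - p.2) + 1 - p.1 ≠ 0 at hD
  field_simp
  linear_combination h

end Hmap

namespace Hcomp

variable {k : ℕ → ℕ}

theorem injOn (hpos : ∀ i, 1 ≤ i → 1 ≤ k i) (n : ℕ) : Set.InjOn (Hcomp k n) Delta := by
  induction n with
  | zero => exact Set.injOn_id _
  | succ n ih => exact ih.comp (Hmap.injOn (hpos _ n.succ_pos)) (Hmap.mapsTo (hpos _ n.succ_pos))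

theorem image_segment (hpos : ∀ i, 1 ≤ i → 1 ≤ k i) (n : ℕ) {p q : ℝ × ℝ} (hp : p ∈ Delta)
    (hq : q ∈ Delta) :
    Hcomp k n '' segment ℝ p q = segment ℝ (Hcomp k n p) (Hcomp k n q) := by
  induction n generalizing p q with
  | zero => simp [Hcomp]
  | succ n ih =>
    have hk := hpos _ n.succ_pos
    rw [Hcomp, Set.image_comp, Hmap.image_segment hk hp hq,
      ih (Hmap.mapsTo hk hp) (Hmap.mapsTo hk hq)]
    rfl

end Hcomp

/-- The line `α x + β y = γ` weakly separates the vertex `(0,0)` of `Δ` from `(1,0)` and `(0,1)`: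
`α x + β y - γ` is `≤ 0` at the first, `≥ 0` at the others, and not identically zero. -/
def IsAdmissibleLine (α β γ : ℝ) : Prop :=
  0 ≤ γ ∧ γ ≤ α ∧ γ ≤ β ∧ 0 < α + β - γ

theorem IsAdmissibleLine.next {α β γ : ℝ} {k : ℝ} (hk : 1 ≤ k) (h : IsAdmissibleLine α β γ) :
    IsAdmissibleLine (α + β - γ) ((k + 1) * α - γ) α := by
  obtain ⟨h0, hα, hβ, hpos⟩ := h
  exact ⟨by linarith, by linarith, by nlinarith, by nlinarith⟩

theorem snd_ne_and_slope_nonpos {α β : ℝ} (hα : 0 < α) (hβ : 0 ≤ β) {p q : ℝ × ℝ}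
    (hpq : p ≠ q) (h : α * p.1 + β * p.2 = α * q.1 + β * q.2) :
    q.2 ≠ p.2 ∧ (q.1 - p.1) * (q.2 - p.2) ≤ 0 := by
  have hx : α * (q.1 - p.1) = -β * (q.2 - p.2) := by linear_combination -h
  refine ⟨fun hy => hpq (Prod.ext ?_ hy.symm), ?_⟩
  · rw [hy, sub_self, mul_zero, mul_eq_zero] at hx
    linarith [hx.resolve_left hα.ne']
  · have : α * ((q.1 - p.1) * (q.2 - p.2)) = -β * (q.2 - p.2) ^ 2 := by
      linear_combination (q.2 - p.2) * hx
    nlinarith [mul_nonneg hβ (sq_nonneg (q.2 - p.2))]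

/-- `α > 0` fails for the side `y = 0` of `Δ`, but holds for the image of any admissible line
under `H_k`. -/
def OnAdmissibleLine (p q : ℝ × ℝ) : Prop :=
  ∃ α β γ : ℝ, IsAdmissibleLine α β γ ∧ 0 < α ∧ α * p.1 + β * p.2 = γ ∧ α * q.1 + β * q.2 = γ

theorem onAdmissibleLine_Hmap {k : ℕ} (hk : 1 ≤ k) {p q : ℝ × ℝ} (hp : p ∈ Delta) (hq : q ∈ Delta)
    {α β γ : ℝ} (hℓ : IsAdmissibleLine α β γ) (hpℓ : α * p.1 + β * p.2 = γ)
    (hqℓ : α * q.1 + β * q.2 = γ) : OnAdmissibleLine (Hmap k p) (Hmap k q) :=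
  ⟨_, _, _, hℓ.next (by exact_mod_cast hk), hℓ.2.2.2,
    Hmap.mem_line (one_pos.trans_le (Hmap.one_le_denominator hk hp)).ne' hpℓ,
    Hmap.mem_line (one_pos.trans_le (Hmap.one_le_denominator hk hq)).ne' hqℓ⟩

namespace OnAdmissibleLine

theorem Hcomp {k : ℕ → ℕ} (hpos : ∀ i, 1 ≤ i → 1 ≤ k i) (n : ℕ) {p q : ℝ × ℝ}
    (h : OnAdmissibleLine p q) (hp : p ∈ Delta) (hq : q ∈ Delta) :
    OnAdmissibleLine (Hcomp k n p) (Hcomp k n q) := by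
  induction n generalizing p q with
  | zero => exact h
  | succ n ih =>
    have hk := hpos _ n.succ_pos
    obtain ⟨α, β, γ, hℓ, -, hpℓ, hqℓ⟩ := h
    exact ih (onAdmissibleLine_Hmap hk hp hq hℓ hpℓ hqℓ) (Hmap.mapsTo hk hp) (Hmap.mapsTo hk hq)

theorem snd_ne_and_slope_nonpos {p q : ℝ × ℝ} (h : OnAdmissibleLine p q) (hpq : p ≠ q) :
    q.2 ≠ p.2 ∧ (q.1 - p.1) * (q.2 - p.2) ≤ 0 := by
  obtain ⟨_, _, _, ⟨hγ, -, hβ, -⟩, hα, hpℓ, hqℓ⟩ := h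
  exact _root_.snd_ne_and_slope_nonpos hα (hγ.trans hβ) hpq (hpℓ.trans hqℓ.symm)

end OnAdmissibleLine

theorem exists_admissibleLine_of_vertices {p q : ℝ × ℝ}
    (hp : p ∈ ({(0, 0), (1, 0), (0, 1)} : Set (ℝ × ℝ)))
    (hq : q ∈ ({(0, 0), (1, 0), (0, 1)} : Set (ℝ × ℝ))) :
    ∃ α β γ : ℝ, IsAdmissibleLine α β γ ∧ α * p.1 + β * p.2 = γ ∧ α * q.1 + β * q.2 = γ := by
  rcases hp with rfl | rfl | rfl <;> rcases hq with rfl | rfl | rfl <;>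
    first
    | (refine ⟨0, 1, 0, ?_⟩; norm_num [IsAdmissibleLine]; done)
    | (refine ⟨1, 0, 0, ?_⟩; norm_num [IsAdmissibleLine]; done)
    | (refine ⟨1, 1, 1, ?_⟩; norm_num [IsAdmissibleLine])

/-- for every `n ≥ 1`, positive integers `k_1, …, k_n` and each side `S`
of the triangle `Δ` (segment joining two of the vertices `(0,0)`, `(1,0)`, `(0,1)`),
the image `H_{k_1} ∘ ⋯ ∘ H_{k_n}(S)` is the segment joining the images of the two
endpoints; these images `(x₁,y₁)`, `(x₂,y₂)` satisfy `y₁ ≠ y₂` and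
`(x₂−x₁)(y₂−y₁) ≤ 0`: every side of `H_{k_1} ∘ ⋯ ∘ H_{k_n}(Δ)` is a nondegenerate
segment, vertical or of negative slope. -/
theorem statement9 (n : ℕ) (hn : 1 ≤ n) (k : ℕ → ℕ) (hpos : ∀ i, 1 ≤ i → 1 ≤ k i)
    (p q : ℝ × ℝ)
    (hp : p ∈ ({(0, 0), (1, 0), (0, 1)} : Set (ℝ × ℝ)))
    (hq : q ∈ ({(0, 0), (1, 0), (0, 1)} : Set (ℝ × ℝ))) (hpq : p ≠ q) :
    Hcomp k n '' segment ℝ p q = segment ℝ (Hcomp k n p) (Hcomp k n q) ∧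
    (Hcomp k n q).2 ≠ (Hcomp k n p).2 ∧
    ((Hcomp k n q).1 - (Hcomp k n p).1) * ((Hcomp k n q).2 - (Hcomp k n p).2) ≤ 0 := by
  have vertex_mem : ∀ r ∈ ({(0, 0), (1, 0), (0, 1)} : Set (ℝ × ℝ)), r ∈ Delta := by
    rintro r (rfl | rfl | rfl) <;> norm_num [Delta]
  have hpΔ := vertex_mem p hp
  have hqΔ := vertex_mem q hq
  obtain ⟨m, rfl⟩ := Nat.exists_eq_add_of_le' hn
  have hk := hpos _ m.succ_pos
  obtain ⟨α, β, γ, hℓ, hpℓ, hqℓ⟩ := exists_admissibleLine_of_vertices hp hq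
  have hline : OnAdmissibleLine (Hcomp k (m + 1) p) (Hcomp k (m + 1) q) :=
    (onAdmissibleLine_Hmap hk hpΔ hqΔ hℓ hpℓ hqℓ).Hcomp hpos m
      (Hmap.mapsTo hk hpΔ) (Hmap.mapsTo hk hqΔ)
  exact ⟨Hcomp.image_segment hpos _ hpΔ hqΔ,
    hline.snd_ne_and_slope_nonpos ((Hcomp.injOn hpos _).ne hpΔ hqΔ hpq)⟩
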